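/- The simplification rules on deducibility constraint systems are strongly terminating: there is no infinite sequence of simplification steps C ⇝_σ1 C1 ⇝_σ2 C2 ⇝ ... . -/

import Mathlib

open scoped Classical

/-- Terms built from names, variables, pairing, symmetric/asymmetric encryption,
signatures and private keys. -/
inductive Tm where
  | var : ℕ → Tm
  | name : ℕ → Tm
  | pair : Tm → Tm → Tm
  | enc : Tm → Tm → Tm
  | enca : Tm → Tm → Tm
  | sign : Tm → Tm → Tm
  | priv : Tm → Tm
deriving DecidableEq

namespace Tm

/-- The variables of a term. -/
def vars : Tm → Finset ℕ
  | var x => {x}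
  | name _ => ∅
  | pair s t => s.vars ∪ t.vars
  | enc s t => s.vars ∪ t.vars
  | enca s t => s.vars ∪ t.vars
  | sign s t => s.vars ∪ t.vars
  | priv t => t.vars

/-- The subterms of a term. -/
def subterms : Tm → Finset Tm
  | var x => {var x}
  | name a => {name a}
  | pair s t => insert (pair s t) (s.subterms ∪ t.subterms)
  | enc s t => insert (enc s t) (s.subterms ∪ t.subterms)
  | enca s t => insert (enca s t) (s.subterms ∪ t.subterms)
  | sign s t => insert (sign s t) (s.subterms ∪ t.subterms)
  | priv t => insert (priv t) t.subterms

/-- A term is a variable. -/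
def IsVar : Tm → Prop
  | var _ => True
  | _ => False

end Tm

/-- The Dolev-Yao deduction relation `T ⊢ u`. -/
inductive Deduce : Finset Tm → Tm → Prop where
  | ax {T u} : u ∈ T → Deduce T u
  | pairI {T x y} : Deduce T x → Deduce T y → Deduce T (Tm.pair x y)
  | encI {T x y} : Deduce T x → Deduce T y → Deduce T (Tm.enc x y)
  | encaI {T x y} : Deduce T x → Deduce T y → Deduce T (Tm.enca x y)
  | signI {T x y} : Deduce T x → Deduce T y → Deduce T (Tm.sign x y)
  | encE {T x y} : Deduce T (Tm.enc x y) → Deduce T y → Deduce T x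
  | encaE {T x y} : Deduce T (Tm.enca x y) → Deduce T (Tm.priv y) → Deduce T x
  | fstE {T x y} : Deduce T (Tm.pair x y) → Deduce T x
  | sndE {T x y} : Deduce T (Tm.pair x y) → Deduce T y

/-- Substitutions. -/
def Subst := ℕ → Tm

/-- Applying a substitution to a term. -/
def Tm.subst (σ : Subst) : Tm → Tm
  | .var x => σ x
  | .name a => .name a
  | .pair s t => .pair (s.subst σ) (t.subst σ)
  | .enc s t => .enc (s.subst σ) (t.subst σ)
  | .enca s t => .enca (s.subst σ) (t.subst σ)
  | .sign s t => .sign (s.subst σ) (t.subst σ)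
  | .priv t => .priv (t.subst σ)

/-- The identity substitution. -/
def idSubst : Subst := Tm.var

/-- Composition of substitutions: `σ.comp τ` applies `σ` first, then `τ`. -/
def Subst.comp (σ τ : Subst) : Subst := fun x => (σ x).subst τ

/-- The variables of a finite set of terms. -/
def setVars (T : Finset Tm) : Finset ℕ := T.sup Tm.vars

/-- The subterms of a finite set of terms. -/
def stSet (T : Finset Tm) : Finset Tm := T.sup Tm.subterms

/-- A deducibility constraint `T ⊩ u`: a (nonempty) finite set of terms and a term. -/
abbrev Cst := Finset Tm × Tm

/-- Applying a substitution to a constraint. -/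
def conSubst (σ : Subst) (c : Cst) : Cst := (c.1.image (Tm.subst σ), c.2.subst σ)

/-- Applying a substitution to a constraint system. -/
def csSubst (σ : Subst) (S : Finset Cst) : Finset Cst := S.image (conSubst σ)

/-- The variables of a constraint system. -/
def sysVars (C : Finset Cst) : Finset ℕ := C.sup (fun c => setVars c.1 ∪ c.2.vars)

/-- The set `{x | (T' ⊩ x) ∈ S, T' ⊊ T}` of variables (as terms) occurring as
right-hand sides of constraints of `S` whose left-hand side is strictly contained in `T`. -/
noncomputable def extraVars (S : Finset Cst) (T : Finset Tm) : Finset Tm :=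
  (S.filter (fun c => c.1 ⊂ T ∧ c.2.IsVar)).image Prod.snd

/-- `C` is a deducibility constraint system: left-hand sides are nonempty,
totally ordered by inclusion, and every variable of a left-hand side `T` occurs in
the right-hand side of a constraint whose left-hand side is minimal among those whose
right-hand side contains the variable, and strictly included in `T`. -/
def IsCS (C : Finset Cst) : Prop :=
  (∀ c ∈ C, c.1.Nonempty) ∧
  (∀ c ∈ C, ∀ c' ∈ C, c.1 ⊆ c'.1 ∨ c'.1 ⊆ c.1) ∧
  (∀ c ∈ C, ∀ x ∈ setVars c.1,
    ∃ c' ∈ C, x ∈ c'.2.vars ∧ c'.1 ⊂ c.1 ∧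
      ∀ c'' ∈ C, x ∈ c''.2.vars → c'.1 ⊆ c''.1)

/-- A solution of a constraint system: a ground substitution whose domain is `V(C)`
such that `Tθ ⊢ uθ` for every constraint `(T ⊩ u) ∈ C`. -/
def IsSolution (θ : Subst) (C : Finset Cst) : Prop :=
  (∀ x ∈ sysVars C, (θ x).vars = ∅) ∧
  (∀ x, x ∉ sysVars C → θ x = Tm.var x) ∧
  (∀ c ∈ C, Deduce (c.1.image (Tm.subst θ)) (c.2.subst θ))

/-- A (non-`⊥`) constraint system is solved if all right-hand sides are variables. -/
def Solved (C : Finset Cst) : Prop := ∀ c ∈ C, c.2.IsVar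

/-- `σ` is a most general unifier of `t` and `u`. -/
def IsMGU (σ : Subst) (t u : Tm) : Prop :=
  t.subst σ = u.subst σ ∧
  (∀ x, x ∉ t.vars ∪ u.vars → σ x = Tm.var x) ∧
  (∀ x, (σ x).vars ⊆ t.vars ∪ u.vars) ∧
  (∀ δ : Subst, t.subst δ = u.subst δ → ∃ ρ : Subst, ∀ x, δ x = (σ x).subst ρ)

/-- The binary constructors `pair`, `enc`, `enca`, `sign`. -/
inductive BinOp where
  | pair | enc | enca | sign

def BinOp.app : BinOp → Tm → Tm → Tm
  | .pair => Tm.pair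
  | .enc => Tm.enc
  | .enca => Tm.enca
  | .sign => Tm.sign

/-- One step of simplification `C ⇝_σ C'` (result `none` represents `⊥`),
given by the rules R1, R2, R3, R3', R4, Rf. -/
inductive Step : Finset Cst → Subst → Option (Finset Cst) → Prop where
  | r1 {S : Finset Cst} {T : Finset Tm} {u : Tm} :
      (T, u) ∈ S →
      Deduce (T ∪ extraVars (S.erase (T, u)) T) u →
      Step S idSubst (some (S.erase (T, u)))
  | r2 {S : Finset Cst} {T : Finset Tm} {u t : Tm} {σ : Subst} :
      (T, u) ∈ S → t ∈ stSet T → ¬ t.IsVar → ¬ u.IsVar → t ≠ u →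
      IsMGU σ t u →
      Step S σ (some (csSubst σ S))
  | r3 {S : Finset Cst} {T : Finset Tm} {u t₁ t₂ : Tm} {σ : Subst} :
      (T, u) ∈ S → t₁ ∈ stSet T → t₂ ∈ stSet T → ¬ t₁.IsVar → ¬ t₂.IsVar →
      t₁ ≠ t₂ → IsMGU σ t₁ t₂ →
      Step S σ (some (csSubst σ S))
  | r3' {S : Finset Cst} {T : Finset Tm} {u t₁ t₂ t₃ : Tm} {σ : Subst} :
      (T, u) ∈ S → Tm.enca t₁ t₂ ∈ stSet T → Tm.priv t₃ ∈ stSet T →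
      t₂ ≠ t₃ → (t₂.IsVar ∨ t₃.IsVar) → IsMGU σ t₂ t₃ →
      Step S σ (some (csSubst σ S))
  | r4 {S : Finset Cst} {T : Finset Tm} {u : Tm} :
      (T, u) ∈ S → setVars T ∪ u.vars = ∅ → ¬ Deduce T u →
      Step S idSubst none
  | rf {S : Finset Cst} {T : Finset Tm} {u v : Tm} (b : BinOp) :
      (T, b.app u v) ∈ S →
      Step S idSubst (some (insert (T, u) (insert (T, v) (S.erase (T, b.app u v)))))

/-- Sequences of simplification steps `C ⇝*_σ C'`, composing the substitutions. -/
inductive Steps : Finset Cst → Subst → Option (Finset Cst) → Prop where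
  | refl (S) : Steps S idSubst (some S)
  | tail {S : Finset Cst} {σ : Subst} {S' : Finset Cst} {τ : Subst} {R} :
      Steps S σ (some S') → Step S' τ R → Steps S (σ.comp τ) R

/-- A security property, identified with its set of solutions (ground substitutions
making it true); `θ` solves `φσ` iff `σθ` solves `φ`. -/
def SecProp := Subst → Prop

/-- The instance `φσ` of a security property `φ` by a substitution `σ`. -/
def SecProp.subst (φ : SecProp) (σ : Subst) : SecProp := fun θ => φ (σ.comp θ)

/-- `θ` is an attack for `φ` and `C` if it is a solution of both. -/
def IsAttack (θ : Subst) (C : Finset Cst) (φ : SecProp) : Prop :=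
  IsSolution θ C ∧ φ θ

/-- One memorizing simplification step: `C;D ⇒_σ (C' \ D); (D ∪ (C \ C'))`. -/
inductive MStep : Finset Cst × Finset Cst → Subst → Finset Cst × Finset Cst → Prop where
  | mk {C D C' : Finset Cst} {σ : Subst} :
      Step C σ (some C') → MStep (C, D) σ (C' \ D, D ∪ (C \ C'))

/-- Sequences of memorizing simplification steps, composing the substitutions. -/
inductive MSteps : Finset Cst × Finset Cst → Subst → Finset Cst × Finset Cst → Prop where
  | refl (P) : MSteps P idSubst P
  | tail {P : Finset Cst × Finset Cst} {σ : Subst} {Q : Finset Cst × Finset Cst}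
      {τ : Subst} {R : Finset Cst × Finset Cst} :
      MSteps P σ Q → MStep Q τ R → MSteps P (σ.comp τ) R


/-!
R1 and Rf do not create variables and decrease the total size of the right-hand sides; R2, R3
and R3' apply a most general unifier of two distinct terms, which eliminates a variable of the
system. Hence the number of variables, and then the total size, decreases lexicographically.

That an mgu `σ` of `t ≠ u` eliminates a variable is shown by induction on the number of
variables of `t, u`: there is a binding `x ↦ s`, with `x` not in `s`, that every unifier
satisfies. If `x ↦ s` already unifies `t` and `u`, then `σ` only renames the other variables;
otherwise `σ` is still most general for the instances of `t, u` under `x ↦ s`, which have one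
variable fewer.
-/

attribute [local simp] Tm.subst Tm.vars

namespace Tm

lemma mem_vars_subst {σ : Subst} {t : Tm} {y : ℕ} :
    y ∈ (t.subst σ).vars ↔ ∃ x ∈ t.vars, y ∈ (σ x).vars := by
  induction t <;> simp_all [or_and_right, exists_or]

lemma subst_subst (t : Tm) (σ τ : Subst) : (t.subst σ).subst τ = t.subst (σ.comp τ) := by
  induction t <;> simp_all [Subst.comp]

lemma eq_var_of_subst_eq_var {σ : Subst} {t : Tm} {y : ℕ} (h : t.subst σ = var y) :
    ∃ x, t = var x := by
  cases t <;> simp_all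

lemma sizeOf_pos (t : Tm) : 0 < sizeOf t := by
  cases t <;> simp

lemma sizeOf_le_sizeOf_subst {σ : Subst} {t : Tm} {x : ℕ} (hx : x ∈ t.vars) :
    sizeOf (σ x) ≤ sizeOf (t.subst σ) := by
  induction t <;> simp only [vars, Finset.mem_union, Finset.mem_singleton] at hx <;> grind [subst]

lemma sizeOf_lt_sizeOf_subst {σ : Subst} {t : Tm} {x : ℕ} (hx : x ∈ t.vars) (ht : t ≠ var x) :
    sizeOf (σ x) < sizeOf (t.subst σ) := by
  cases t <;> simp only [vars, Finset.mem_union, Finset.mem_singleton] at hx <;>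
    grind [subst, sizeOf_le_sizeOf_subst]

lemma vars_subset_of_mem_subterms {s t : Tm} (h : s ∈ t.subterms) : s.vars ⊆ t.vars := by
  induction t <;> grind [subterms, vars]

end Tm

namespace BinOp

@[simp] lemma subst_app (b : BinOp) (s t : Tm) (σ : Subst) :
    (b.app s t).subst σ = b.app (s.subst σ) (t.subst σ) := by
  cases b <;> rfl

@[simp] lemma vars_app (b : BinOp) (s t : Tm) : (b.app s t).vars = s.vars ∪ t.vars := by
  cases b <;> rfl

@[simp] lemma sizeOf_app (b : BinOp) (s t : Tm) :
    sizeOf (b.app s t) = 1 + sizeOf s + sizeOf t := by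
  cases b <;> rfl

@[simp] lemma app_inj {b b' : BinOp} {s t s' t' : Tm} :
    b.app s t = b'.app s' t' ↔ b = b' ∧ s = s' ∧ t = t' := by
  cases b <;> cases b' <;> simp [BinOp.app]

@[simp] lemma app_ne_name (b : BinOp) (s t : Tm) (a : ℕ) : b.app s t ≠ Tm.name a := by
  cases b <;> simp [BinOp.app]

@[simp] lemma app_ne_priv (b : BinOp) (s t r : Tm) : b.app s t ≠ Tm.priv r := by
  cases b <;> simp [BinOp.app]

@[simp] lemma name_ne_app (b : BinOp) (s t : Tm) (a : ℕ) : Tm.name a ≠ b.app s t :=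
  (app_ne_name b s t a).symm

@[simp] lemma priv_ne_app (b : BinOp) (s t r : Tm) : Tm.priv r ≠ b.app s t :=
  (app_ne_priv b s t r).symm

end BinOp

lemma Tm.cases_app (t : Tm) :
    (∃ x, t = var x) ∨ (∃ a, t = name a) ∨ (∃ s, t = priv s) ∨
      ∃ (b : BinOp) (s₁ s₂ : Tm), t = b.app s₁ s₂ := by
  cases t
  case var x => exact .inl ⟨x, rfl⟩
  case name a => exact .inr <| .inl ⟨a, rfl⟩
  case priv s => exact .inr <| .inr <| .inl ⟨s, rfl⟩
  case pair s₁ s₂ => exact .inr <| .inr <| .inr ⟨.pair, s₁, s₂, rfl⟩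
  case enc s₁ s₂ => exact .inr <| .inr <| .inr ⟨.enc, s₁, s₂, rfl⟩
  case enca s₁ s₂ => exact .inr <| .inr <| .inr ⟨.enca, s₁, s₂, rfl⟩
  case sign s₁ s₂ => exact .inr <| .inr <| .inr ⟨.sign, s₁, s₂, rfl⟩

lemma exists_smaller_disagreement {t u : Tm} {δ : Subst} (ht : ∀ x, t ≠ .var x)
    (hu : ∀ y, u ≠ .var y) (hne : t ≠ u) (hδ : t.subst δ = u.subst δ) :
    ∃ a c : Tm, sizeOf a < sizeOf t ∧ a ≠ c ∧ a.vars ∪ c.vars ⊆ t.vars ∪ u.vars ∧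
      ∀ δ' : Subst, t.subst δ' = u.subst δ' → a.subst δ' = c.subst δ' := by
  rcases t.cases_app with ⟨x, rfl⟩ | ⟨n, rfl⟩ | ⟨s, rfl⟩ | ⟨b, s₁, s₂, rfl⟩
  · exact absurd rfl (ht x)
  all_goals
    rcases u.cases_app with ⟨y, rfl⟩ | ⟨n', rfl⟩ | ⟨s', rfl⟩ | ⟨b', u₁, u₂, rfl⟩
  -- only `priv`/`priv` and `app`/`app` survive: other pairs of heads are not unifiable
  all_goals first
    | exact absurd rfl (hu _)
    | exact absurd hδ hne
    | (simp at hδ; done)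
    | skip
  · refine ⟨s, s', by simp, fun h => hne (h ▸ rfl), by simp, fun δ' h => ?_⟩
    simpa using h
  · obtain ⟨rfl, -⟩ := BinOp.app_inj.1 (by simpa using hδ)
    by_cases h₁ : s₁ = u₁
    · subst h₁
      refine ⟨s₂, u₂, by simp, fun h => hne (h ▸ rfl), ?_, fun δ' h => ?_⟩
      · simp only [BinOp.vars_app]; grind
      · simpa using h
    · refine ⟨s₁, u₁, by simp; omega, h₁, ?_, fun δ' h => ?_⟩
      · simp only [BinOp.vars_app]; grind
      · simp_all

def IsForcedBinding (t u : Tm) (x : ℕ) (s : Tm) : Prop :=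
  x ∈ t.vars ∪ u.vars ∧ x ∉ s.vars ∧ s.vars ⊆ t.vars ∪ u.vars ∧
    ∀ δ : Subst, t.subst δ = u.subst δ → δ x = s.subst δ

namespace IsForcedBinding

variable {t u a c s : Tm} {x : ℕ}

lemma symm (h : IsForcedBinding t u x s) : IsForcedBinding u t x s := by
  obtain ⟨hx, hxs, hs, hforced⟩ := h
  exact ⟨Finset.union_comm t.vars _ ▸ hx, hxs, Finset.union_comm t.vars _ ▸ hs,
    fun δ hδ => hforced δ hδ.symm⟩

lemma of_forall_unifier (h : IsForcedBinding a c x s) (hsub : a.vars ∪ c.vars ⊆ t.vars ∪ u.vars)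
    (hunif : ∀ δ : Subst, t.subst δ = u.subst δ → a.subst δ = c.subst δ) :
    IsForcedBinding t u x s := by
  obtain ⟨hx, hxs, hs, hforced⟩ := h
  exact ⟨hsub hx, hxs, hs.trans hsub, fun δ hδ => hforced δ (hunif δ hδ)⟩

lemma var_left {δ : Subst} (hne : Tm.var x ≠ u) (hδ : (Tm.var x).subst δ = u.subst δ) :
    IsForcedBinding (.var x) u x u := by
  refine ⟨by simp [Tm.vars], fun hx => ?_, by simp, fun δ' h => h⟩
  exact (Tm.sizeOf_lt_sizeOf_subst (σ := δ) hx hne.symm).ne (congrArg sizeOf hδ)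

end IsForcedBinding

lemma exists_isForcedBinding {t u : Tm} {δ : Subst} (hne : t ≠ u)
    (hδ : t.subst δ = u.subst δ) : ∃ x s, IsForcedBinding t u x s := by
  induction hn : sizeOf t using Nat.strong_induction_on generalizing t u with
  | _ n ih =>
  by_cases ht : ∃ x, t = .var x
  · obtain ⟨x, rfl⟩ := ht
    exact ⟨x, u, .var_left hne hδ⟩
  by_cases hu : ∃ y, u = .var y
  · obtain ⟨y, rfl⟩ := hu
    exact ⟨y, t, (IsForcedBinding.var_left hne.symm hδ.symm).symm⟩
  simp only [not_exists] at ht hu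
  obtain ⟨a, c, hsize, hac, hsub, hunif⟩ := exists_smaller_disagreement ht hu hne hδ
  obtain ⟨x, s, h⟩ := ih _ (hn ▸ hsize) hac (hunif δ hδ) rfl
  exact ⟨x, s, h.of_forall_unifier hsub hunif⟩

def Subst.varsImage (σ : Subst) (V : Finset ℕ) : Finset ℕ := V.biUnion fun z => (σ z).vars

namespace Subst

variable {σ : Subst} {V W : Finset ℕ}

lemma mem_varsImage {y : ℕ} : y ∈ σ.varsImage V ↔ ∃ z ∈ V, y ∈ (σ z).vars :=
  Finset.mem_biUnion

lemma varsImage_union : σ.varsImage (V ∪ W) = σ.varsImage V ∪ σ.varsImage W :=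
  Finset.union_biUnion

lemma varsImage_sup {ι : Type*} (s : Finset ι) (g : ι → Finset ℕ) :
    σ.varsImage (s.sup g) = s.sup fun i => σ.varsImage (g i) := by
  simp only [varsImage, Finset.sup_eq_biUnion, Finset.biUnion_biUnion]

lemma varsImage_eq_self (h : ∀ z ∈ V, σ z = .var z) : σ.varsImage V = V := by
  ext y
  refine mem_varsImage.trans ⟨fun ⟨z, hz, hy⟩ => ?_, fun hy => ⟨y, hy, by simp [h y hy]⟩⟩
  rw [h z hz, Tm.vars, Finset.mem_singleton] at hy
  exact hy ▸ hz

lemma card_varsImage_le (h : ∀ z ∈ V, ∃ w, σ z = .var w) : (σ.varsImage V).card ≤ V.card := by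
  refine Finset.card_biUnion_le.trans (Finset.sum_le_card_nsmul _ _ 1 fun z hz => ?_) |>.trans_eq
    (by simp)
  obtain ⟨w, hw⟩ := h z hz
  simp [hw, Tm.vars]

end Subst

lemma Tm.vars_subst (σ : Subst) (t : Tm) : (t.subst σ).vars = σ.varsImage t.vars := by
  ext y
  rw [mem_vars_subst, Subst.mem_varsImage]

def Subst.single (x : ℕ) (s : Tm) : Subst := Function.update idSubst x s

namespace Subst

variable {x : ℕ} {s : Tm}

@[simp] lemma single_self : single x s x = s := Function.update_self ..

lemma single_of_ne {z : ℕ} (hz : z ≠ x) : single x s z = .var z := Function.update_of_ne hz ..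

lemma single_comp {δ : Subst} (h : δ x = s.subst δ) :
    (single x s).comp δ = δ := by
  funext z
  by_cases hz : z = x
  · simp [comp, hz, h]
  · simp [comp, single_of_ne hz]

lemma varsImage_single {V : Finset ℕ} (hx : x ∈ V) (hxs : x ∉ s.vars) (hs : s.vars ⊆ V) :
    (single x s).varsImage V = V.erase x := by
  ext y
  rw [mem_varsImage, Finset.mem_erase]
  constructor
  · rintro ⟨z, hz, hy⟩
    by_cases hzx : z = x
    · subst hzx
      rw [single_self] at hy
      exact ⟨fun h => hxs (h ▸ hy), hs hy⟩
    · rw [single_of_ne hzx, Tm.vars, Finset.mem_singleton] at hy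
      exact hy ▸ ⟨hzx, hz⟩
  · rintro ⟨hyx, hy⟩
    exact ⟨y, hy, by simp [single_of_ne hyx, Tm.vars]⟩

lemma varsImage_subset_varsImage_erase {σ : Subst} {V : Finset ℕ} (hσ : σ x = s.subst σ)
    (hs : s.vars ⊆ V.erase x) : σ.varsImage V ⊆ σ.varsImage (V.erase x) := by
  intro y hy
  obtain ⟨z, hz, hyz⟩ := mem_varsImage.1 hy
  by_cases hzx : z = x
  · rw [hzx, hσ, Tm.vars_subst] at hyz
    exact Finset.biUnion_subset_biUnion_of_subset_left _ hs hyz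
  · exact mem_varsImage.2 ⟨z, Finset.mem_erase.2 ⟨hzx, hz⟩, hyz⟩

end Subst

theorem card_varsImage_lt_of_forall_unifier {t u : Tm} {σ : Subst} (hne : t ≠ u)
    (hσ : t.subst σ = u.subst σ)
    (hgen : ∀ δ : Subst, t.subst δ = u.subst δ →
      ∃ ρ : Subst, ∀ z ∈ t.vars ∪ u.vars, δ z = (σ z).subst ρ) :
    (σ.varsImage (t.vars ∪ u.vars)).card < (t.vars ∪ u.vars).card := by
  induction hn : (t.vars ∪ u.vars).card using Nat.strong_induction_on generalizing t u with
  | _ n ih =>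
  subst hn
  obtain ⟨x, s, hx, hxs, hs, hforced⟩ := exists_isForcedBinding hne hσ
  set V := t.vars ∪ u.vars
  have hs' : s.vars ⊆ V.erase x := fun y hy => Finset.mem_erase.2 ⟨fun h => hxs (h ▸ hy), hs hy⟩
  have hV' : (t.subst (.single x s)).vars ∪ (u.subst (.single x s)).vars = V.erase x := by
    rw [Tm.vars_subst, Tm.vars_subst, ← Subst.varsImage_union, Subst.varsImage_single hx hxs hs]
  have herase : (V.erase x).card < V.card := Finset.card_erase_lt_of_mem hx
  refine (Finset.card_le_card
    (Subst.varsImage_subset_varsImage_erase (hforced σ hσ) hs')).trans_lt ?_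
  by_cases hτ : t.subst (.single x s) = u.subst (.single x s)
  · -- `x ↦ s` is itself a unifier, so `σ` can only rename the remaining variables
    obtain ⟨ρ, hρ⟩ := hgen _ hτ
    refine (Subst.card_varsImage_le fun z hz => ?_).trans_lt herase
    obtain ⟨hzx, hz⟩ := Finset.mem_erase.1 hz
    exact Tm.eq_var_of_subst_eq_var (hρ z hz ▸ Subst.single_of_ne hzx)
  · -- `σ` is still most general for the instances under `x ↦ s`, which no longer contain `x`
    have hσ' : (t.subst (.single x s)).subst σ = (u.subst (.single x s)).subst σ := by
      rw [Tm.subst_subst, Tm.subst_subst, Subst.single_comp (hforced σ hσ), hσ]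
    refine lt_trans ?_ herase
    rw [← hV']
    refine ih _ (hV' ▸ herase) hτ hσ' (fun δ hδ => ?_) rfl
    obtain ⟨ρ, hρ⟩ :=
      hgen ((Subst.single x s).comp δ) (by rwa [← Tm.subst_subst, ← Tm.subst_subst])
    refine ⟨ρ, fun z hz => ?_⟩
    obtain ⟨hzx, hz⟩ := Finset.mem_erase.1 (hV' ▸ hz)
    rw [← hρ z hz, Subst.comp, Subst.single_of_ne hzx]
    rfl

lemma IsMGU.card_varsImage_lt {σ : Subst} {t u : Tm} {W : Finset ℕ} (h : IsMGU σ t u)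
    (hne : t ≠ u) (hW : t.vars ∪ u.vars ⊆ W) : (σ.varsImage W).card < W.card := by
  obtain ⟨hσ, hid, -, hgen⟩ := h
  set V := t.vars ∪ u.vars
  have hlt : (σ.varsImage V).card < V.card :=
    card_varsImage_lt_of_forall_unifier hne hσ fun δ hδ =>
      (hgen δ hδ).imp fun _ hρ z _ => hρ z
  rw [← Finset.union_sdiff_of_subset hW, Subst.varsImage_union,
    Subst.varsImage_eq_self fun z hz => hid z (Finset.mem_sdiff.1 hz).2,
    Finset.card_union_of_disjoint Finset.disjoint_sdiff]
  exact (Finset.card_union_le _ _).trans_lt (Nat.add_lt_add_right hlt _)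

lemma vars_subset_sysVars {S : Finset Cst} {c : Cst} (hc : c ∈ S) :
    setVars c.1 ∪ c.2.vars ⊆ sysVars S :=
  Finset.le_sup (f := fun c : Cst => setVars c.1 ∪ c.2.vars) hc

lemma vars_subset_setVars_of_mem_stSet {T : Finset Tm} {t : Tm} (ht : t ∈ stSet T) :
    t.vars ⊆ setVars T := by
  obtain ⟨w, hw, htw⟩ := Finset.mem_sup.1 ht
  exact (Tm.vars_subset_of_mem_subterms htw).trans (Finset.le_sup (f := Tm.vars) hw)

lemma setVars_image_subst (σ : Subst) (T : Finset Tm) :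
    setVars (T.image (Tm.subst σ)) = σ.varsImage (setVars T) := by
  simp only [setVars, Finset.sup_image, Subst.varsImage_sup, Function.comp_def, Tm.vars_subst]

lemma sysVars_csSubst (σ : Subst) (S : Finset Cst) :
    sysVars (csSubst σ S) = σ.varsImage (sysVars S) := by
  simp only [sysVars, csSubst, conSubst, Finset.sup_image, Subst.varsImage_sup, Function.comp_def,
    setVars_image_subst, Tm.vars_subst, Subst.varsImage_union]

lemma Finset.sum_insert_le {ι M : Type*} [DecidableEq ι] [AddCommMonoid M] [PartialOrder M]
    [CanonicallyOrderedAdd M] (f : ι → M) (a : ι) (s : Finset ι) :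
    ∑ x ∈ insert a s, f x ≤ f a + ∑ x ∈ s, f x := by
  by_cases ha : a ∈ s
  · rw [Finset.insert_eq_of_mem ha]
    exact le_add_self
  · rw [Finset.sum_insert ha]

noncomputable def complexity (S : Finset Cst) : ℕ ×ₗ ℕ :=
  toLex ((sysVars S).card, ∑ c ∈ S, sizeOf c.2)

lemma complexity_lt_of_card_lt {S S' : Finset Cst}
    (h : (sysVars S').card < (sysVars S).card) : complexity S' < complexity S :=
  Prod.Lex.toLex_lt_toLex'.2 ⟨h.le, fun e => absurd e h.ne⟩

lemma complexity_lt_of_subset_of_sum_lt {S S' : Finset Cst} (hV : sysVars S' ⊆ sysVars S)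
    (hsize : ∑ c ∈ S', sizeOf c.2 < ∑ c ∈ S, sizeOf c.2) : complexity S' < complexity S :=
  Prod.Lex.toLex_lt_toLex'.2 ⟨Finset.card_le_card hV, fun _ => hsize⟩

lemma complexity_csSubst_lt {S : Finset Cst} {σ : Subst} {t u : Tm} (hσ : IsMGU σ t u)
    (hne : t ≠ u) (ht : t.vars ⊆ sysVars S) (hu : u.vars ⊆ sysVars S) :
    complexity (csSubst σ S) < complexity S := by
  refine complexity_lt_of_card_lt ?_
  rw [sysVars_csSubst]
  exact hσ.card_varsImage_lt hne (Finset.union_subset ht hu)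

theorem complexity_lt_of_step {S S' : Finset Cst} {σ : Subst} (h : Step S σ (some S')) :
    complexity S' < complexity S := by
  have hlhs {T : Finset Tm} {u t : Tm} (hc : (T, u) ∈ S) (ht : t ∈ stSet T) :
      t.vars ⊆ sysVars S :=
    (vars_subset_setVars_of_mem_stSet ht).trans (Finset.union_subset_left (vars_subset_sysVars hc))
  have hrhs {T : Finset Tm} {u : Tm} (hc : (T, u) ∈ S) : u.vars ⊆ sysVars S :=
    Finset.union_subset_right (vars_subset_sysVars hc)
  cases h with
  | r1 hc _ =>
    refine complexity_lt_of_subset_of_sum_lt (Finset.sup_mono (Finset.erase_subset _ _)) ?_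
    rw [← Finset.add_sum_erase _ _ hc]
    exact Nat.lt_add_of_pos_left (Tm.sizeOf_pos _)
  | r2 hc ht _ _ hne hσ => exact complexity_csSubst_lt hσ hne (hlhs hc ht) (hrhs hc)
  | r3 hc ht₁ ht₂ _ _ hne hσ => exact complexity_csSubst_lt hσ hne (hlhs hc ht₁) (hlhs hc ht₂)
  | r3' hc henca hpriv hne _ hσ =>
    exact complexity_csSubst_lt hσ hne (Finset.subset_union_right.trans (hlhs hc henca))
      (hlhs (t := .priv _) hc hpriv)
  | @rf T u v b hc =>
    refine complexity_lt_of_subset_of_sum_lt (Finset.sup_le fun c hc' => ?_) ?_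
    · have hvars := vars_subset_sysVars hc
      simp only [BinOp.vars_app] at hvars
      rcases Finset.mem_insert.1 hc' with rfl | hc'
      · exact (Finset.union_subset_union_right Finset.subset_union_left).trans hvars
      rcases Finset.mem_insert.1 hc' with rfl | hc'
      · exact (Finset.union_subset_union_right Finset.subset_union_right).trans hvars
      · exact vars_subset_sysVars (Finset.mem_of_mem_erase hc')
    · set R := S.erase (T, b.app u v)
      calc ∑ c ∈ insert (T, u) (insert (T, v) R), sizeOf c.2
          ≤ sizeOf u + (sizeOf v + ∑ c ∈ R, sizeOf c.2) :=
            (Finset.sum_insert_le _ _ _).trans (Nat.add_le_add_left (Finset.sum_insert_le _ _ _) _)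
        _ < sizeOf (b.app u v) + ∑ c ∈ R, sizeOf c.2 := by simp only [BinOp.sizeOf_app]; omega
        _ = ∑ c ∈ S, sizeOf c.2 := Finset.add_sum_erase _ (fun c => sizeOf c.2) hc

/-- strong termination: there is no infinite sequence of simplification
steps starting from a deducibility constraint system. -/
theorem step_terminating :
    ¬ ∃ (f : ℕ → Finset Cst) (σ : ℕ → Subst),
        IsCS (f 0) ∧ ∀ n : ℕ, Step (f n) (σ n) (some (f (n + 1))) := by
  rintro ⟨f, σ, -, hstep⟩
  obtain ⟨n, hn⟩ := WellFounded.not_rel_apply_succ (r := (· < ·)) (complexity ∘ f)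
  exact hn (complexity_lt_of_step (hstep n))
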